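/- Fix ε ∈ (0, π/2) and set θ₁ := -3π/2 + ε, θ₂ := π/2 - ε. For ξ = r e^{iθ} with r > 0 and θ ∈ (-3π/2, π/2), define ξ^{1/2} := r^{1/2} e^{iθ/2}. Then for every σ ∈ ℂ* and every τ ∈ ℂ* with ε < arg τ < π - ε, one has τ^{1/2} e^{σ² τ} = (1/(2 π^{1/2})) [ -∫_0^∞ e^{-r e^{iθ₁}/τ} (r e^{iθ₁})^{-1/2} e^{-2σ (r e^{iθ₁})^{1/2}} e^{iθ₁} dr + ∫_0^∞ e^{-r e^{iθ₂}/τ} (r e^{iθ₂})^{-1/2} e^{-2σ (r e^{iθ₂})^{1/2}} e^{iθ₂} dr ], where τ^{1/2} is the branch with arg(τ^{1/2}) ∈ (0, π/2); both integrals converge absolutely. -/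

import Mathlib

/-!
Substituting `r = x²` turns the integral along the ray of direction `θ` into
`2 ∫₀^∞ g(x e^{iθ/2}) e^{iθ/2} dx` with `g z = exp (-z²/τ - 2σz)`. As long as
`Re (e^{2iα}/τ) > 0`, the integrals of `g` over the half-lines `t e^{iα}`, `t > 0` and `t < 0`,
do not depend on `α`: the `α`-derivative of the integrand is `i ∂ₜ (t · integrand)`, whose
integral vanishes by Gaussian decay. The ray `θ₁/2 = -3π/4 + ε/2` is the half-line `t < 0` of
direction `π/4 + ε/2`, and `θ₂/2 = π/4 - ε/2`; rotating both to `π/4` joins them into the full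
line of direction `π/4`, where the Gaussian integral is
`(πτ/i)^{1/2} e^{iπ/4} e^{σ²τ} = √π τ^{1/2} e^{σ²τ}` for `0 < arg τ < π`.
-/

open Complex Filter MeasureTheory Set
open scoped Real Topology

lemma integrable_exp_neg_mul_sq_add_mul {γ : ℝ} (hγ : 0 < γ) (δ : ℝ) :
    Integrable fun t : ℝ => rexp (-γ * t ^ 2 + δ * t) := by
  refine (integrable_cexp_quadratic (b := γ) (by simpa using hγ) δ 0).norm.congr
    (.of_forall fun t => ?_)
  simp [Complex.norm_exp, ← Complex.ofReal_pow]

lemma integrable_abs_pow_mul_exp_neg_mul_sq_add_mul_abs {γ : ℝ} (hγ : 0 < γ) (δ : ℝ) (n : ℕ) :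
    Integrable fun t : ℝ => |t| ^ n * rexp (-γ * t ^ 2 + δ * |t|) := by
  refine ((integrable_exp_neg_mul_sq_add_mul hγ (n + δ)).add
    (integrable_exp_neg_mul_sq_add_mul hγ (-(n + δ)))).mono' (by fun_prop)
    (.of_forall fun t => ?_)
  have hpow : |t| ^ n ≤ rexp (n * |t|) := by
    rw [Real.exp_nat_mul]
    exact pow_le_pow_left₀ (abs_nonneg t) ((le_add_of_nonneg_left zero_le_one).trans
      (by simpa [add_comm] using Real.add_one_le_exp |t|)) n
  have hsplit : rexp ((n + δ) * |t|) ≤ rexp ((n + δ) * t) + rexp (-(n + δ) * t) := by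
    rcases abs_cases t with ⟨h, _⟩ | ⟨h, _⟩ <;> rw [h]
    · exact le_add_of_nonneg_right (Real.exp_pos _).le
    · rw [mul_neg, ← neg_mul]; exact le_add_of_nonneg_left (Real.exp_pos _).le
  rw [Real.norm_of_nonneg (by positivity)]
  calc |t| ^ n * rexp (-γ * t ^ 2 + δ * |t|)
      ≤ rexp (n * |t|) * rexp (-γ * t ^ 2 + δ * |t|) := by gcongr
    _ = rexp ((n + δ) * |t|) * rexp (-γ * t ^ 2) := by
      rw [← Real.exp_add, ← Real.exp_add]; ring_nf
    _ ≤ (rexp ((n + δ) * t) + rexp (-(n + δ) * t)) * rexp (-γ * t ^ 2) := by gcongr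
    _ = _ := by simp only [add_mul, ← Real.exp_add, Pi.add_apply]; ring_nf

lemma integrable_quadratic_mul_exp_neg_mul_sq_add_mul_abs {γ : ℝ} (hγ : 0 < γ)
    (c₀ c₁ c₂ δ : ℝ) :
    Integrable fun t : ℝ => (c₀ + c₁ * |t| + c₂ * t ^ 2) * rexp (-γ * t ^ 2 + δ * |t|) := by
  have h := fun n => integrable_abs_pow_mul_exp_neg_mul_sq_add_mul_abs hγ δ n
  refine ((((h 0).const_mul c₀).add ((h 1).const_mul c₁)).add ((h 2).const_mul c₂)).congr
    (.of_forall fun t => ?_)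
  simp only [Pi.add_apply, pow_zero, pow_one, sq_abs]
  ring

lemma tendsto_abs_mul_exp_neg_mul_sq_add_mul_abs {γ : ℝ} (hγ : 0 < γ) (δ : ℝ) :
    Tendsto (fun t : ℝ => |t| * rexp (-γ * t ^ 2 + δ * |t|)) (cocompact ℝ) (𝓝 0) := by
  suffices h : Tendsto (fun s : ℝ => s * rexp (-γ * s ^ 2 + δ * s)) atTop (𝓝 0) by
    simpa [Function.comp_def, sq_abs] using h.comp (tendsto_norm_cocompact_atTop (E := ℝ))
  refine squeeze_zero' ?_ ?_ (by simpa using Real.tendsto_pow_mul_exp_neg_atTop_nhds_zero 1)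
  · filter_upwards [eventually_ge_atTop 0] with s hs using by positivity
  filter_upwards [eventually_ge_atTop ((δ + 1) / γ), eventually_ge_atTop 0] with s hs hs0
  rw [div_le_iff₀ hγ] at hs
  gcongr
  nlinarith

/-- `rayIntegrand a b α t = g (t e^{iα}) e^{iα}` with `g z = exp (-a z² + b z)`, so integrating
over `t` integrates `g` along the line of direction `α`. -/
noncomputable def rayIntegrand (a b : ℂ) (α t : ℝ) : ℂ :=
  cexp (-(a * cexp (2 * α * I)) * t ^ 2 + b * cexp (α * I) * t + α * I)

/-- `∂ₜ (t * rayIntegrand a b α t)`; `I` times it is also `∂_α (rayIntegrand a b α t)`. -/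
noncomputable def rayIntegrandDeriv (a b : ℂ) (α t : ℝ) : ℂ :=
  rayIntegrand a b α t * (1 + b * cexp (α * I) * t - 2 * (a * cexp (2 * α * I)) * t ^ 2)

section RayIntegrand

variable (a b : ℂ) {α γ : ℝ}

lemma continuous_rayIntegrand (α : ℝ) : Continuous (rayIntegrand a b α) := by
  unfold rayIntegrand; fun_prop

lemma continuous_rayIntegrandDeriv (α : ℝ) : Continuous (rayIntegrandDeriv a b α) :=
  (continuous_rayIntegrand a b α).mul (by fun_prop)

lemma hasDerivAt_mul_rayIntegrand (α t : ℝ) :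
    HasDerivAt (fun t : ℝ => (t : ℂ) * rayIntegrand a b α t) (rayIntegrandDeriv a b α t) t := by
  have hexp : HasDerivAt (fun z : ℂ => -(a * cexp (2 * α * I)) * z ^ 2 + b * cexp (α * I) * z
      + α * I) (-(a * cexp (2 * α * I)) * (2 * t) + b * cexp (α * I)) t := by
    simpa using (((hasDerivAt_pow 2 (t : ℂ)).const_mul (-(a * cexp (2 * α * I)))).add
      ((hasDerivAt_id (t : ℂ)).const_mul (b * cexp (α * I)))).add_const (α * I : ℂ)
  refine (ofRealCLM.hasDerivAt.mul hexp.cexp.comp_ofReal).congr_deriv ?_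
  simp only [rayIntegrandDeriv, rayIntegrand, ofRealCLM_apply, ofReal_one]
  ring

lemma hasDerivAt_rayIntegrand_angle (α t : ℝ) :
    HasDerivAt (fun α : ℝ => rayIntegrand a b α t) (I * rayIntegrandDeriv a b α t) α := by
  have h₂ : HasDerivAt (fun z : ℂ => 2 * z * I) (2 * I) α := by
    simpa using ((hasDerivAt_id (α : ℂ)).const_mul 2).mul_const I
  have h₁ : HasDerivAt (fun z : ℂ => z * I) I α := by
    simpa using (hasDerivAt_id (α : ℂ)).mul_const I
  have hexp : HasDerivAt (fun z : ℂ => -(a * cexp (2 * z * I)) * t ^ 2 + b * cexp (z * I) * t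
      + z * I) (-(a * (cexp (2 * α * I) * (2 * I))) * t ^ 2 + b * (cexp (α * I) * I) * t + I)
      α :=
    (((h₂.cexp.const_mul a).neg.mul_const _).add ((h₁.cexp.const_mul b).mul_const _)).add h₁
  refine hexp.cexp.comp_ofReal.congr_deriv ?_
  simp only [rayIntegrandDeriv, rayIntegrand]
  ring

lemma cexp_two_mul_add_pi_mul_I (α : ℝ) : cexp (2 * ↑(α + π) * I) = cexp (2 * α * I) := by
  rw [show 2 * ((α + π : ℝ) : ℂ) * I = 2 * α * I + 2 * π * I by push_cast; ring,
    Complex.exp_add, Complex.exp_two_pi_mul_I, mul_one]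

lemma rayIntegrand_add_pi_neg (α t : ℝ) :
    rayIntegrand a b (α + π) (-t) = -rayIntegrand a b α t := by
  have hexp : cexp (↑(α + π) * I) = -cexp (α * I) := by
    rw [ofReal_add, add_mul, Complex.exp_add, Complex.exp_pi_mul_I, mul_neg_one]
  rw [rayIntegrand, rayIntegrand, cexp_two_mul_add_pi_mul_I, hexp, ← mul_neg_one (cexp (_ + _)),
    ← Complex.exp_pi_mul_I, ← Complex.exp_add]
  congr 1
  push_cast
  ring

lemma setIntegral_Ioi_rayIntegrand_eq_neg (α : ℝ) :
    ∫ t in Ioi (0 : ℝ), rayIntegrand a b α t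
      = -∫ t in Iic (0 : ℝ), rayIntegrand a b (α + π) t := by
  rw [← neg_zero, ← integral_comp_neg_Ioi, neg_zero, ← integral_neg]
  simp only [rayIntegrand_add_pi_neg, neg_neg]

variable {a}

lemma norm_rayIntegrand_le (hγ : γ ≤ (a * cexp (2 * α * I)).re) (t : ℝ) :
    ‖rayIntegrand a b α t‖ ≤ rexp (-γ * t ^ 2 + ‖b‖ * |t|) := by
  have hlin : (b * cexp (α * I) * t).re ≤ ‖b‖ * |t| := by
    calc (b * cexp (α * I) * t).re ≤ ‖b * cexp (α * I) * t‖ := re_le_norm _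
      _ = ‖b‖ * |t| := by simp [norm_exp_ofReal_mul_I]
  have hquad : (-(a * cexp (2 * α * I)) * t ^ 2).re ≤ -γ * t ^ 2 := by
    rw [← ofReal_pow, re_mul_ofReal, neg_re]
    nlinarith [sq_nonneg t]
  rw [rayIntegrand, norm_exp, add_re, add_re, mul_I_re, ofReal_im, neg_zero, add_zero]
  exact Real.exp_le_exp.2 (add_le_add hquad hlin)

lemma norm_rayIntegrandDeriv_le (hγ : γ ≤ (a * cexp (2 * α * I)).re) (t : ℝ) :
    ‖rayIntegrandDeriv a b α t‖
      ≤ (1 + ‖b‖ * |t| + 2 * ‖a‖ * t ^ 2) * rexp (-γ * t ^ 2 + ‖b‖ * |t|) := by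
  have hpoly : ‖1 + b * cexp (α * I) * t - 2 * (a * cexp (2 * α * I)) * t ^ 2‖
      ≤ 1 + ‖b‖ * |t| + 2 * ‖a‖ * t ^ 2 := by
    refine (norm_sub_le _ _).trans (add_le_add ((norm_add_le _ _).trans_eq ?_) (le_of_eq ?_))
    · simp [norm_exp_ofReal_mul_I]
    · rw [← ofReal_ofNat, ← ofReal_mul, ← ofReal_pow]
      simp [norm_exp_ofReal_mul_I, show (2 * α * I) = ((2 * α : ℝ) : ℂ) * I by push_cast; ring]
  rw [rayIntegrandDeriv, norm_mul, mul_comm]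
  exact mul_le_mul hpoly (norm_rayIntegrand_le b hγ t) (norm_nonneg _) (by positivity)

lemma integrable_rayIntegrand (hα : 0 < (a * cexp (2 * α * I)).re) :
    Integrable (rayIntegrand a b α) :=
  (by simpa using integrable_abs_pow_mul_exp_neg_mul_sq_add_mul_abs hα ‖b‖ 0 :
      Integrable fun t : ℝ => rexp (-(a * cexp (2 * α * I)).re * t ^ 2 + ‖b‖ * |t|)).mono'
    (continuous_rayIntegrand a b α).aestronglyMeasurable
    (.of_forall (norm_rayIntegrand_le b le_rfl))

lemma integrable_rayIntegrandDeriv (hα : 0 < (a * cexp (2 * α * I)).re) :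
    Integrable (rayIntegrandDeriv a b α) :=
  (integrable_quadratic_mul_exp_neg_mul_sq_add_mul_abs hα _ _ _ _).mono'
    (continuous_rayIntegrandDeriv a b α).aestronglyMeasurable
    (.of_forall (norm_rayIntegrandDeriv_le b le_rfl))

lemma tendsto_mul_rayIntegrand_cocompact (hα : 0 < (a * cexp (2 * α * I)).re) :
    Tendsto (fun t : ℝ => (t : ℂ) * rayIntegrand a b α t) (cocompact ℝ) (𝓝 0) := by
  refine squeeze_zero_norm (fun t => ?_) (tendsto_abs_mul_exp_neg_mul_sq_add_mul_abs hα ‖b‖)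
  rw [norm_mul, norm_real, Real.norm_eq_abs]
  exact mul_le_mul_of_nonneg_left (norm_rayIntegrand_le b le_rfl t) (abs_nonneg t)

lemma setIntegral_Ioi_rayIntegrandDeriv (hα : 0 < (a * cexp (2 * α * I)).re) :
    ∫ t in Ioi (0 : ℝ), rayIntegrandDeriv a b α t = 0 := by
  simpa using integral_Ioi_of_hasDerivAt_of_tendsto' (a := 0)
    (fun t _ => hasDerivAt_mul_rayIntegrand a b α t)
    (integrable_rayIntegrandDeriv b hα).integrableOn
    ((tendsto_mul_rayIntegrand_cocompact b hα).mono_left atTop_le_cocompact)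

lemma setIntegral_Iic_rayIntegrandDeriv (hα : 0 < (a * cexp (2 * α * I)).re) :
    ∫ t in Iic (0 : ℝ), rayIntegrandDeriv a b α t = 0 := by
  simpa using integral_Iic_of_hasDerivAt_of_tendsto' (a := 0)
    (fun t _ => hasDerivAt_mul_rayIntegrand a b α t)
    (integrable_rayIntegrandDeriv b hα).integrableOn
    ((tendsto_mul_rayIntegrand_cocompact b hα).mono_left atBot_le_cocompact)

lemma hasDerivAt_setIntegral_rayIntegrand (S : Set ℝ) (hα : 0 < (a * cexp (2 * α * I)).re) :
    HasDerivAt (fun α : ℝ => ∫ t in S, rayIntegrand a b α t)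
      (∫ t in S, I * rayIntegrandDeriv a b α t) α := by
  set γ := (a * cexp (2 * α * I)).re / 2
  have hγ : 0 < γ := half_pos hα
  have hnhds : {β : ℝ | γ < (a * cexp (2 * β * I)).re} ∈ 𝓝 α :=
    (isOpen_lt continuous_const (by fun_prop)).mem_nhds (half_lt_self hα)
  refine (hasDerivAt_integral_of_dominated_loc_of_deriv_le hnhds
    (.of_forall fun β => (continuous_rayIntegrand a b β).aestronglyMeasurable.restrict)
    (integrable_rayIntegrand b hα).restrict
    ((continuous_rayIntegrandDeriv a b α).const_mul I).aestronglyMeasurable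
    (.of_forall fun t β hβ => ?_)
    (integrable_quadratic_mul_exp_neg_mul_sq_add_mul_abs hγ 1 ‖b‖ (2 * ‖a‖) ‖b‖).restrict
    (.of_forall fun t β _ => hasDerivAt_rayIntegrand_angle a b β t)).2
  rw [norm_mul, norm_I, one_mul]
  exact norm_rayIntegrandDeriv_le b (le_of_lt hβ) t

lemma setIntegral_rayIntegrand_eq_of_forall_re_pos {S : Set ℝ} {α₀ α₁ : ℝ} (h : α₀ ≤ α₁)
    (hpos : ∀ α ∈ Icc α₀ α₁, 0 < (a * cexp (2 * α * I)).re)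
    (hS : ∀ α ∈ Icc α₀ α₁, ∫ t in S, rayIntegrandDeriv a b α t = 0) :
    ∫ t in S, rayIntegrand a b α₁ t = ∫ t in S, rayIntegrand a b α₀ t := by
  have hderiv : ∀ α ∈ Icc α₀ α₁,
      HasDerivAt (fun α : ℝ => ∫ t in S, rayIntegrand a b α t) 0 α := fun α hα => by
    simpa [integral_const_mul, hS α hα] using hasDerivAt_setIntegral_rayIntegrand b S (hpos α hα)
  exact constant_of_has_deriv_right_zero
    (fun α hα => (hderiv α hα).continuousAt.continuousWithinAt)
    (fun α hα => (hderiv α (Ico_subset_Icc_self hα)).hasDerivWithinAt) α₁ (right_mem_Icc.2 h)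

lemma integral_rayIntegrand (hα : 0 < (a * cexp (2 * α * I)).re) :
    ∫ t, rayIntegrand a b α t
      = (π / (a * cexp (2 * α * I))) ^ (1 / 2 : ℂ) * cexp (α * I + b ^ 2 / (4 * a)) := by
  have ha : a ≠ 0 := by rintro rfl; simp at hα
  have hsq : cexp (α * I) ^ 2 = cexp (2 * α * I) := by
    rw [← Complex.exp_nat_mul]; push_cast; ring_nf
  unfold rayIntegrand
  rw [integral_cexp_quadratic (by simpa using hα), neg_neg]
  congr 2
  rw [mul_pow, hsq]
  field_simp
  ring

end RayIntegrand

lemma re_inv_mul_cexp_mul_I {τ : ℂ} (hτ : τ ≠ 0) (φ : ℝ) :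
    (τ⁻¹ * cexp (φ * I)).re = ‖τ‖⁻¹ * Real.cos (φ - τ.arg) := by
  have h : τ⁻¹ * cexp (φ * I) = ((‖τ‖⁻¹ : ℝ) : ℂ) * cexp (↑(φ - τ.arg) * I) := by
    conv_lhs => rw [← norm_mul_exp_arg_mul_I τ]
    rw [ofReal_sub, sub_mul, Complex.exp_sub]
    push_cast
    field_simp [norm_ne_zero_iff.2 hτ]
  rw [h, re_ofReal_mul, exp_ofReal_mul_I_re]

lemma re_inv_mul_cexp_mul_I_pos {τ : ℂ} (hτ : τ ≠ 0) {φ : ℝ} (h₀ : τ.arg - π / 2 < φ)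
    (h₁ : φ < τ.arg + π / 2) : 0 < (τ⁻¹ * cexp (φ * I)).re := by
  rw [re_inv_mul_cexp_mul_I hτ]
  exact mul_pos (by simpa using hτ) (Real.cos_pos_of_mem_Ioo ⟨by linarith, by linarith⟩)

lemma cpow_half_div_inv_mul_I_mul_exp {τ : ℂ} (hτ : τ ≠ 0) (harg : -(π / 2) < τ.arg) :
    (π / (τ⁻¹ * I)) ^ (1 / 2 : ℂ) * cexp (↑(π / 4) * I) = Real.sqrt π * τ ^ (1 / 2 : ℂ) := by
  have hsplit : (π / (τ⁻¹ * I) : ℂ) = τ * -I * π := by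
    field_simp; rw [Complex.I_sq]; ring
  have hlog : log (τ * -I * π) = Real.log π + log τ - π / 2 * I := by
    rw [log_mul_ofReal _ Real.pi_pos _ (by simp [hτ]), log_mul hτ (by simp), log_neg_I]
    · ring
    · rw [arg_neg_I]; constructor <;> linarith [Complex.arg_le_pi τ]
  rw [hsplit, cpow_def_of_ne_zero (by simp [hτ, Real.pi_ne_zero]), hlog,
    cpow_def_of_ne_zero hτ, Real.sqrt_eq_rpow, Complex.ofReal_cpow Real.pi_pos.le,
    cpow_def_of_ne_zero (by simp [Real.pi_ne_zero]), ← Complex.ofReal_log Real.pi_pos.le,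
    ← Complex.exp_add, ← Complex.exp_add]
  congr 1
  push_cast
  ring

lemma integral_rayIntegrand_pi_div_four (σ : ℂ) {τ : ℂ} (harg₀ : 0 < τ.arg)
    (harg₁ : τ.arg < π) :
    ∫ t, rayIntegrand τ⁻¹ (-2 * σ) (π / 4) t
      = Real.sqrt π * (τ ^ (1 / 2 : ℂ) * cexp (σ ^ 2 * τ)) := by
  have hτ : τ ≠ 0 := by rintro rfl; simp at harg₀
  have hI : 2 * ((π / 4 : ℝ) : ℂ) * I = ((π / 2 : ℝ) : ℂ) * I := by push_cast; ring
  have hpos : 0 < (τ⁻¹ * cexp (2 * ↑(π / 4) * I)).re := by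
    rw [hI]; exact re_inv_mul_cexp_mul_I_pos hτ (by linarith) (by linarith)
  rw [integral_rayIntegrand _ hpos, hI, ofReal_div, ofReal_ofNat, exp_pi_div_two_mul_I,
    Complex.exp_add, ← mul_assoc, cpow_half_div_inv_mul_I_mul_exp hτ (by linarith), mul_assoc]
  congr 3
  field_simp
  ring

/-- The integrand of the statement along the ray `ξ = r e^{iθ}`, with `ξ^{1/2} = √r e^{iθ/2}`. -/
noncomputable def borelRayIntegrand (σ τ : ℂ) (θ r : ℝ) : ℂ :=
  cexp (-((r : ℂ) * cexp ((θ : ℂ) * I)) / τ) *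
    (((Real.sqrt r : ℂ))⁻¹ * cexp (-((θ : ℂ) * I) / 2)) *
    cexp (-2 * σ * ((Real.sqrt r : ℂ) * cexp ((θ : ℂ) * I / 2))) *
    cexp ((θ : ℂ) * I)

section BorelRay

variable (σ τ : ℂ)

lemma eqOn_smul_borelRayIntegrand_rpow_two (θ : ℝ) :
    EqOn (fun x : ℝ => (2 * x ^ ((2 : ℝ) - 1)) • borelRayIntegrand σ τ θ (x ^ (2 : ℝ)))
      (fun x => 2 * rayIntegrand τ⁻¹ (-2 * σ) (θ / 2) x) (Ioi 0) := by
  intro x (hx : 0 < x)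
  have hx' : (x : ℂ) ≠ 0 := ofReal_ne_zero.2 hx.ne'
  have h₂ : 2 * ((θ / 2 : ℝ) : ℂ) * I = θ * I := by push_cast; ring
  have h₁ : ((θ / 2 : ℝ) : ℂ) * I = θ * I / 2 := by push_cast; ring
  simp only [borelRayIntegrand, rayIntegrand, Real.rpow_two, Real.sqrt_sq hx.le, real_smul,
    h₁, h₂]
  rw [show (2 : ℝ) - 1 = 1 by norm_num, Real.rpow_one, show
    -(τ⁻¹ * cexp (θ * I)) * x ^ 2 + -2 * σ * cexp (θ * I / 2) * x + θ * I / 2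
      = -(↑(x ^ 2) * cexp (θ * I)) / τ + -(θ * I) / 2 + -2 * σ * (x * cexp (θ * I / 2)) + θ * I
      by push_cast; ring]
  simp only [Complex.exp_add]
  push_cast
  field_simp

lemma integrableOn_borelRayIntegrand {θ : ℝ} (hθ : 0 < (τ⁻¹ * cexp (θ * I)).re) :
    IntegrableOn (borelRayIntegrand σ τ θ) (Ioi 0) := by
  have hα : 0 < (τ⁻¹ * cexp (2 * ↑(θ / 2) * I)).re := by
    push_cast; ring_nf at hθ ⊢; exact hθ
  rw [← integrableOn_Ioi_comp_rpow_iff _ two_ne_zero, abs_two,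
    integrableOn_congr_fun (eqOn_smul_borelRayIntegrand_rpow_two σ τ θ) measurableSet_Ioi]
  exact ((integrable_rayIntegrand _ hα).const_mul 2).integrableOn

lemma setIntegral_borelRayIntegrand (θ : ℝ) :
    ∫ r in Ioi 0, borelRayIntegrand σ τ θ r
      = 2 * ∫ x in Ioi 0, rayIntegrand τ⁻¹ (-2 * σ) (θ / 2) x := by
  rw [← integral_comp_rpow_Ioi_of_pos two_pos,
    setIntegral_congr_fun measurableSet_Ioi (eqOn_smul_borelRayIntegrand_rpow_two σ τ θ),
    integral_const_mul]

end BorelRay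

lemma cpow_half_mul_cexp_eq_ray_integrals {ε : ℝ} (hε : 0 < ε) (σ : ℂ) {τ : ℂ}
    (harg₀ : ε < τ.arg) (harg₁ : τ.arg < π - ε) :
    τ ^ (1 / 2 : ℂ) * cexp (σ ^ 2 * τ) = 1 / (2 * Real.sqrt π) *
      (-(∫ r in Ioi 0, borelRayIntegrand σ τ (-3 * π / 2 + ε) r) +
        ∫ r in Ioi 0, borelRayIntegrand σ τ (π / 2 - ε) r) := by
  have hτ : τ ≠ 0 := by rintro rfl; simp at harg₀; linarith
  set F := rayIntegrand τ⁻¹ (-2 * σ)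
  have hpos : ∀ α ∈ Icc (π / 4 - ε / 2) (π / 4 + ε / 2), 0 < (τ⁻¹ * cexp (2 * α * I)).re :=
    fun α hα => by
      simpa using re_inv_mul_cexp_mul_I_pos hτ (φ := 2 * α) (by linarith [hα.1])
        (by linarith [hα.2])
  have hIoi : ∫ t in Ioi 0, F (π / 4 - ε / 2) t = ∫ t in Ioi 0, F (π / 4) t :=
    (setIntegral_rayIntegrand_eq_of_forall_re_pos _ (by linarith)
      (fun α hα => hpos α ⟨hα.1, by linarith [hα.2]⟩)
      (fun α hα => setIntegral_Ioi_rayIntegrandDeriv _ (hpos α ⟨hα.1, by linarith [hα.2]⟩))).symm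
  have hIic : ∫ t in Iic 0, F (π / 4 + ε / 2) t = ∫ t in Iic 0, F (π / 4) t :=
    setIntegral_rayIntegrand_eq_of_forall_re_pos _ (by linarith)
      (fun α hα => hpos α ⟨by linarith [hα.1], hα.2⟩)
      (fun α hα => setIntegral_Iic_rayIntegrandDeriv _ (hpos α ⟨by linarith [hα.1], hα.2⟩))
  have hint : Integrable (F (π / 4)) :=
    integrable_rayIntegrand _ (hpos _ ⟨by linarith, by linarith⟩)
  have hline := intervalIntegral.integral_Iic_add_Ioi (b := 0) hint.integrableOn hint.integrableOn
  rw [integral_rayIntegrand_pi_div_four σ (by linarith) (by linarith)] at hline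
  rw [setIntegral_borelRayIntegrand, setIntegral_borelRayIntegrand,
    setIntegral_Ioi_rayIntegrand_eq_neg, show (-3 * π / 2 + ε) / 2 + π = π / 4 + ε / 2 by ring,
    show (π / 2 - ε) / 2 = π / 4 - ε / 2 by ring, hIoi, hIic]
  have hsqrt : (Real.sqrt π : ℂ) ≠ 0 := ofReal_ne_zero.2 (Real.sqrt_pos.2 Real.pi_pos).ne'
  field_simp
  linear_combination -hline

theorem statement1 (ε : ℝ) (hε0 : 0 < ε)
    (θ₁ θ₂ : ℝ) (hθ₁ : θ₁ = -3 * Real.pi / 2 + ε) (hθ₂ : θ₂ = Real.pi / 2 - ε)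
    (σ : ℂ) (τ : ℂ)
    (harg1 : ε < τ.arg) (harg2 : τ.arg < Real.pi - ε) :
    MeasureTheory.IntegrableOn (fun r : ℝ =>
        Complex.exp (-((r : ℂ) * Complex.exp ((θ₁ : ℂ) * Complex.I)) / τ) *
          (((Real.sqrt r : ℂ))⁻¹ * Complex.exp (-((θ₁ : ℂ) * Complex.I) / 2)) *
          Complex.exp (-2 * σ * ((Real.sqrt r : ℂ) * Complex.exp ((θ₁ : ℂ) * Complex.I / 2))) *
          Complex.exp ((θ₁ : ℂ) * Complex.I)) (Set.Ioi 0) ∧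
    MeasureTheory.IntegrableOn (fun r : ℝ =>
        Complex.exp (-((r : ℂ) * Complex.exp ((θ₂ : ℂ) * Complex.I)) / τ) *
          (((Real.sqrt r : ℂ))⁻¹ * Complex.exp (-((θ₂ : ℂ) * Complex.I) / 2)) *
          Complex.exp (-2 * σ * ((Real.sqrt r : ℂ) * Complex.exp ((θ₂ : ℂ) * Complex.I / 2))) *
          Complex.exp ((θ₂ : ℂ) * Complex.I)) (Set.Ioi 0) ∧
    τ ^ ((1 : ℂ) / 2) * Complex.exp (σ ^ 2 * τ)
      = (1 / (2 * (Real.sqrt Real.pi : ℂ))) *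
        (-(∫ r in Set.Ioi (0 : ℝ),
            Complex.exp (-((r : ℂ) * Complex.exp ((θ₁ : ℂ) * Complex.I)) / τ) *
              (((Real.sqrt r : ℂ))⁻¹ * Complex.exp (-((θ₁ : ℂ) * Complex.I) / 2)) *
              Complex.exp (-2 * σ * ((Real.sqrt r : ℂ) * Complex.exp ((θ₁ : ℂ) * Complex.I / 2))) *
              Complex.exp ((θ₁ : ℂ) * Complex.I))
          + ∫ r in Set.Ioi (0 : ℝ),
            Complex.exp (-((r : ℂ) * Complex.exp ((θ₂ : ℂ) * Complex.I)) / τ) *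
              (((Real.sqrt r : ℂ))⁻¹ * Complex.exp (-((θ₂ : ℂ) * Complex.I) / 2)) *
              Complex.exp (-2 * σ * ((Real.sqrt r : ℂ) * Complex.exp ((θ₂ : ℂ) * Complex.I / 2))) *
              Complex.exp ((θ₂ : ℂ) * Complex.I)) := by
  subst hθ₁ hθ₂
  have hτ : τ ≠ 0 := by rintro rfl; simp at harg1; linarith
  have hpos₁ : 0 < (τ⁻¹ * cexp (↑(-3 * π / 2 + ε) * I)).re := by
    rw [re_inv_mul_cexp_mul_I hτ, show -3 * π / 2 + ε - τ.arg = π / 2 + ε - τ.arg - 2 * π by ring,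
      Real.cos_sub_two_pi, ← re_inv_mul_cexp_mul_I hτ]
    exact re_inv_mul_cexp_mul_I_pos hτ (by linarith) (by linarith)
  exact ⟨integrableOn_borelRayIntegrand σ τ hpos₁,
    integrableOn_borelRayIntegrand σ τ (re_inv_mul_cexp_mul_I_pos hτ (by linarith) (by linarith)),
    cpow_half_mul_cexp_eq_ray_integrals hε0 σ harg1 harg2⟩
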